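/- There is a constant C > 0 such that for all real σ ≥ 2 and all real t ≥ 2(σ + 2), |Γ(σ + 2 + it)| ≤ C · t^{σ + 3/2} · e^{−t}. -/

import Mathlib

open Complex

/-!
Shifting `s = a + it` to the right by `n ≈ t - a` steps with `Γ(s + 1) = s Γ(s)` gains a
factor `|s + k| ≥ t` per step, and `|Γ(s + n)| ≤ Γ(a + n)` by the Euler integral, so
`|Γ(s)| t ^ n ≤ Γ(x)` with `x = a + n ∈ [t, t + 1]`. Stirling's upper bound
`Γ(x) ≪ x ^ (x - 1/2) e ^ (-x)`, obtained for real `x` from the factorial case by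
log-convexity, and `(t + 1) ^ (x - 1/2) ≪ t ^ (x - 1/2)` then give
`|Γ(s)| ≪ t ^ (a - 1/2) e ^ (-t)`.
-/

namespace Stirling

open Nat in
theorem factorial_le_stirling {n : ℕ} (hn : n ≠ 0) :
    (n ! : ℝ) ≤ Real.exp 1 * √n * (n / Real.exp 1) ^ n := by
  obtain ⟨m, rfl⟩ := Nat.exists_eq_succ_of_ne_zero hn
  have hseq : stirlingSeq (m + 1) ≤ Real.exp 1 / √2 := by
    simpa [stirlingSeq_one] using stirlingSeq'_antitone (Nat.zero_le m)
  have hrhs : Real.exp 1 * √(m + 1 : ℕ) * ((m + 1 : ℕ) / Real.exp 1) ^ (m + 1) =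
      Real.exp 1 / √2 * (√(2 * (m + 1 : ℕ)) * ((m + 1 : ℕ) / Real.exp 1) ^ (m + 1)) := by
    rw [Real.sqrt_mul zero_le_two]
    field_simp
  rw [hrhs, ← div_le_iff₀ (by positivity)]
  exact hseq

end Stirling

namespace Real

theorem Gamma_nat_le_stirling {n : ℕ} (hn : n ≠ 0) :
    Gamma n ≤ exp 1 * (n : ℝ) ^ ((n : ℝ) - 1 / 2) * exp (-n) := by
  have hn0 : (0 : ℝ) < n := by positivity
  have hGamma : Gamma n = n.factorial / n := by
    rw [eq_div_iff hn0.ne', mul_comm, ← Gamma_add_one hn0.ne', Gamma_nat_eq_factorial]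
  rw [hGamma, div_le_iff₀ hn0]
  refine (Stirling.factorial_le_stirling hn).trans (le_of_eq ?_)
  rw [rpow_sub hn0, rpow_natCast, ← sqrt_eq_rpow, exp_neg, ← exp_one_pow, div_pow]
  field_simp
  exact sq_sqrt hn0.le

theorem Gamma_nat_add_le {n : ℕ} (hn : n ≠ 0) {θ : ℝ} (hθ : 0 < θ) (hθ1 : θ ≤ 1) :
    Gamma (n + θ) ≤ Gamma n * (n : ℝ) ^ θ := by
  have hn0 : (0 : ℝ) < n := by positivity
  have hlog := BohrMollerup.f_add_nat_le convexOn_log_Gamma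
    (fun {y} hy => by
      rw [Function.comp_apply, Function.comp_apply, Gamma_add_one hy.ne',
        log_mul hy.ne' (Gamma_pos_of_pos hy).ne', add_comm]) hn hθ hθ1
  simp only [Function.comp_apply] at hlog
  calc Gamma (n + θ) = exp (log (Gamma (n + θ))) :=
        (exp_log (Gamma_pos_of_pos (by positivity))).symm
    _ ≤ exp (log (Gamma n) + θ * log n) := exp_le_exp.2 hlog
    _ = Gamma n * (n : ℝ) ^ θ := by
      rw [exp_add, exp_log (Gamma_pos_of_pos hn0), rpow_def_of_pos hn0, mul_comm θ]

theorem Gamma_le_stirling {x : ℝ} (hx : 1 < x) :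
    Gamma x ≤ exp 2 * x ^ (x - 1 / 2) * exp (-x) := by
  have hceil : 1 < ⌈x⌉₊ := Nat.lt_ceil.2 (by exact_mod_cast hx)
  obtain ⟨n, hn⟩ := Nat.exists_eq_add_one.2 (zero_lt_one.trans hceil)
  have hn1 : n ≠ 0 := by omega
  have hxn : x ≤ n + 1 := by exact_mod_cast hn ▸ Nat.le_ceil x
  have hnx : (n : ℝ) < x := by
    have := Nat.ceil_lt_add_one (by linarith : (0 : ℝ) ≤ x)
    rw [hn] at this; push_cast at this; linarith
  have hn0 : (0 : ℝ) < n := by positivity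
  calc Gamma x = Gamma (n + (x - n)) := by rw [add_sub_cancel]
    _ ≤ Gamma n * (n : ℝ) ^ (x - n) := Gamma_nat_add_le hn1 (by linarith) (by linarith)
    _ ≤ exp 1 * (n : ℝ) ^ ((n : ℝ) - 1 / 2) * exp (-n) * (n : ℝ) ^ (x - n) := by
      gcongr; exact Gamma_nat_le_stirling hn1
    _ = exp 1 * (n : ℝ) ^ (x - 1 / 2) * exp (-n) := by
      rw [mul_right_comm, mul_assoc (exp 1), ← rpow_add hn0]; ring_nf
    _ ≤ exp 1 * x ^ (x - 1 / 2) * exp (1 - x) := by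
      gcongr <;> linarith
    _ = exp 2 * x ^ (x - 1 / 2) * exp (-x) := by
      rw [sub_eq_add_neg 1 x, exp_add, show (2 : ℝ) = 1 + 1 by norm_num, exp_add]; ring

theorem rpow_add_one_le_rpow_mul_exp {t y : ℝ} (ht : 0 < t) (hy : 0 ≤ y) :
    (t + 1) ^ y ≤ t ^ y * exp (y / t) := by
  have hbase : t + 1 ≤ t * exp (1 / t) := by
    have := mul_le_mul_of_nonneg_left (add_one_le_exp (1 / t)) ht.le
    rwa [mul_add, mul_one, mul_one_div_cancel ht.ne', add_comm] at this
  calc (t + 1) ^ y ≤ (t * exp (1 / t)) ^ y := by gcongr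
    _ = t ^ y * exp (y / t) := by
      rw [mul_rpow ht.le (exp_pos _).le, ← exp_mul]; ring_nf

end Real

namespace Complex

theorem norm_Gamma_le_Gamma_re {s : ℂ} (hs : 0 < s.re) : ‖Gamma s‖ ≤ Real.Gamma s.re := by
  rw [Gamma_eq_integral hs, Real.Gamma_eq_integral hs, GammaIntegral]
  refine (MeasureTheory.norm_integral_le_integral_norm _).trans_eq
    (MeasureTheory.setIntegral_congr_fun measurableSet_Ioi fun x hx => ?_)
  rw [norm_mul, norm_cpow_eq_rpow_re_of_pos hx, norm_real,
    Real.norm_of_nonneg (Real.exp_pos _).le, sub_re, one_re]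

theorem norm_Gamma_mul_abs_im_pow_le (n : ℕ) {s : ℂ} (hs : 0 < s.re) :
    ‖Gamma s‖ * |s.im| ^ n ≤ Real.Gamma (s.re + n) := by
  induction n generalizing s with
  | zero => simpa using norm_Gamma_le_Gamma_re hs
  | succ n ih =>
    have hs0 : s ≠ 0 := fun h => by simp [h] at hs
    calc ‖Gamma s‖ * |s.im| ^ (n + 1) = ‖Gamma s‖ * |s.im| * |(s + 1).im| ^ n := by
          rw [pow_succ', add_im, one_im, add_zero, mul_assoc]
      _ ≤ ‖Gamma (s + 1)‖ * |(s + 1).im| ^ n := by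
          rw [Gamma_add_one s hs0, norm_mul, mul_comm ‖s‖]
          gcongr
          exact abs_im_le_norm s
      _ ≤ Real.Gamma ((s + 1).re + n) := ih (by rw [add_re, one_re]; linarith)
      _ = Real.Gamma (s.re + (n + 1 : ℕ)) := by rw [add_re, one_re]; push_cast; ring_nf

theorem norm_Gamma_le_of_re_le_abs_im {s : ℂ} (hre : 0 < s.re) (hre_im : s.re ≤ |s.im|)
    (him : 1 < |s.im|) :
    ‖Gamma s‖ ≤ Real.exp 4 * |s.im| ^ (s.re - 1 / 2) * Real.exp (-|s.im|) := by
  set a := s.re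
  set t := |s.im|
  have ht0 : 0 < t := by linarith
  set n := ⌈t - a⌉₊
  have htx : t ≤ a + n := by linarith [Nat.le_ceil (t - a)]
  have hxt : a + n ≤ t + 1 := by linarith [Nat.ceil_lt_add_one (sub_nonneg.2 hre_im)]
  have hbound : Real.Gamma (a + n) ≤ Real.exp 4 * t ^ (a - 1 / 2) * Real.exp (-t) * t ^ n :=
    calc Real.Gamma (a + n) ≤ Real.exp 2 * (a + n) ^ (a + n - 1 / 2) * Real.exp (-(a + n)) :=
          Real.Gamma_le_stirling (by linarith)
      _ ≤ Real.exp 2 * (t + 1) ^ (a + n - 1 / 2) * Real.exp (-t) := by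
          gcongr; linarith
      _ ≤ Real.exp 2 * (t ^ (a + n - 1 / 2) * Real.exp ((a + n - 1 / 2) / t)) *
            Real.exp (-t) := by
          gcongr; exact Real.rpow_add_one_le_rpow_mul_exp ht0 (by linarith)
      _ ≤ Real.exp 2 * (t ^ (a + n - 1 / 2) * Real.exp 2) * Real.exp (-t) := by
          gcongr; rw [div_le_iff₀ ht0]; linarith
      _ = Real.exp 4 * t ^ (a - 1 / 2) * Real.exp (-t) * t ^ n := by
          rw [add_sub_right_comm, Real.rpow_add ht0, Real.rpow_natCast,
            show (4 : ℝ) = 2 + 2 by norm_num, Real.exp_add]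
          ring
  exact le_of_mul_le_mul_right ((norm_Gamma_mul_abs_im_pow_le n hre).trans hbound) (by positivity)

end Complex

/-- Stirling-type bound: there is a constant `C > 0` such that for all `σ ≥ 2` and
`t ≥ 2(σ+2)`, `|Γ(σ + 2 + it)| ≤ C · t^(σ+3/2) · e^(-t)`. -/
theorem gamma_vertical_decay_bound :
    ∃ C : ℝ, 0 < C ∧ ∀ σ : ℝ, 2 ≤ σ → ∀ t : ℝ, 2 * (σ + 2) ≤ t →
      ‖Complex.Gamma ((σ : ℂ) + 2 + t * Complex.I)‖ ≤
        C * t ^ (σ + 3 / 2) * Real.exp (-t) := by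
  refine ⟨Real.exp 4, Real.exp_pos 4, fun σ hσ t ht => ?_⟩
  have hre : ((σ : ℂ) + 2 + t * I).re = σ + 2 := by simp
  have him : |((σ : ℂ) + 2 + t * I).im| = t := by
    simp [abs_of_nonneg (by linarith : (0 : ℝ) ≤ t)]
  have h := norm_Gamma_le_of_re_le_abs_im (s := σ + 2 + t * I) (by linarith) (by linarith)
    (by linarith)
  rwa [hre, him, show σ + 2 - 1 / 2 = σ + 3 / 2 by ring] at h
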